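/- Expanding the generalized hypergeometric operator via Stirling numbers: (∏_{j=1}^{N-1}(ϑ+b_j))∂ − ∏_{i=1}^{N}(ϑ+a_i) = Σ_{k=1}^{N} ( Σ_{j=k}^{N} ( S(j−1,k−1)·σ_{N−j}(b) − S(j,k)·σ_{N−j}(a)·x ) ) x^{k−1} ∂^k − σ_N(a), where σ_ℓ denotes the elementary symmetric polynomial of degree ℓ and S denotes Stirling numbers of the second kind. -/

import Mathlib

open PowerSeries

/-- Stirling numbers of the second kind. -/
def stirling2 : ℕ → ℕ → ℕ
  | 0, 0 => 1
  | 0, _ + 1 => 0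
  | _ + 1, 0 => 0
  | j + 1, k + 1 => (k + 1) * stirling2 j (k + 1) + stirling2 j k

/-- The elementary symmetric polynomial of degree `ℓ` in the entries of a tuple `c`
(`0` when `ℓ` exceeds the number of entries). -/
def esymmOf {n : ℕ} (c : Fin n → ℂ) (ℓ : ℕ) : ℂ :=
  ((List.ofFn c : List ℂ) : Multiset ℂ).esymm ℓ

/-- The operator `ϑ + c` where `ϑ = x·d/dx`, acting on formal power series over `ℂ`. -/
noncomputable def thetaOp (c : ℂ) (f : ℂ⟦X⟧) : ℂ⟦X⟧ :=
  X * PowerSeries.derivative ℂ f + PowerSeries.C (R := ℂ) c * f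

/-- The composition `∏_j (ϑ + c_j)` over a list of parameters. -/
noncomputable def prodOp : List ℂ → ℂ⟦X⟧ → ℂ⟦X⟧
  | [] => id
  | c :: cs => thetaOp c ∘ prodOp cs

/-! On a monomial `x ^ n`, the operator `ϑ + c` acts as multiplication by `n + c` and
`x ^ k ∂ ^ k` as multiplication by the falling factorial `n (n - 1) ⋯ (n - k + 1)`. Comparing
coefficients, the identity reduces to expanding `∏ (x + c_i) = Σ_j σ_{m - j}(c) x ^ j` in
falling factorials through `x ^ j = Σ_k S(j, k) x (x - 1) ⋯ (x - k + 1)`; the `b`-part is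
handled in the same way after writing `x ^ (k - 1) ∂ ^ k = (x ^ (k - 1) ∂ ^ (k - 1)) ∂`. -/

theorem stirling2_eq_stirlingSecond : stirling2 = Nat.stirlingSecond := by
  funext j k
  induction j generalizing k with
  | zero => cases k <;> rfl
  | succ j ih => cases k <;> simp [stirling2, Nat.stirlingSecond_succ_succ, ih]

theorem Nat.stirlingSecond_zero_right_of_ne_zero {n : ℕ} (hn : n ≠ 0) :
    n.stirlingSecond 0 = 0 := by
  obtain ⟨m, rfl⟩ := Nat.exists_eq_succ_of_ne_zero hn
  rfl

theorem Finset.sum_Icc_add_one {M : Type*} [AddCommMonoid M] (f : ℕ → M) (a b : ℕ) :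
    ∑ k ∈ Icc (a + 1) (b + 1), f k = ∑ k ∈ Icc a b, f (k + 1) := by
  rw [← map_add_right_Icc, sum_map]
  rfl

theorem Polynomial.X_pow_eq_sum_stirlingSecond_mul_descPochhammer {R : Type*} [CommRing R]
    (n : ℕ) :
    (X : Polynomial R) ^ n =
      ∑ k ∈ Finset.range (n + 1), (n.stirlingSecond k : Polynomial R) * descPochhammer R k := by
  induction n with
  | zero => simp
  | succ n ih =>
    have hshift : ∑ k ∈ Finset.range (n + 1),
          ((k + 1 : ℕ) * n.stirlingSecond (k + 1) : Polynomial R) * descPochhammer R (k + 1) =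
        ∑ k ∈ Finset.range (n + 1),
          (k * n.stirlingSecond k : Polynomial R) * descPochhammer R k := by
      rw [Finset.sum_range_succ, Nat.stirlingSecond_eq_zero_of_lt n.lt_succ_self,
        Finset.sum_range_succ' _ n]
      simp
    calc X ^ (n + 1)
        = ∑ k ∈ Finset.range (n + 1), ((n.stirlingSecond k : Polynomial R) *
            descPochhammer R (k + 1) + (k * n.stirlingSecond k : Polynomial R) *
            descPochhammer R k) := by
          rw [pow_succ, ih, Finset.sum_mul]
          refine Finset.sum_congr rfl fun k _ => ?_
          rw [descPochhammer_succ_right]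
          ring
      _ = ∑ k ∈ Finset.range (n + 1), ((k + 1 : ℕ) * n.stirlingSecond (k + 1) +
            n.stirlingSecond k : Polynomial R) * descPochhammer R (k + 1) := by
          rw [Finset.sum_add_distrib, ← hshift, ← Finset.sum_add_distrib]
          exact Finset.sum_congr rfl fun k _ => by ring
      _ = _ := by
          rw [Finset.sum_range_succ' _ (n + 1)]
          simp [Nat.stirlingSecond_succ_succ]

theorem Multiset.prod_X_add_C_eq_sum_stirlingSecond {R : Type*} [CommRing R] (s : Multiset R) :
    (s.map fun r => Polynomial.X + Polynomial.C r).prod =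
      ∑ k ∈ Finset.range (card s + 1), Polynomial.C (∑ j ∈ Finset.Icc k (card s),
        (j.stirlingSecond k : R) * s.esymm (card s - j)) * descPochhammer R k := by
  calc (s.map fun r => Polynomial.X + Polynomial.C r).prod
      = ∑ j ∈ Finset.range (card s + 1),
          Polynomial.C (s.esymm (card s - j)) * Polynomial.X ^ j := by
        rw [prod_X_add_C_eq_sum_esymm, ← Finset.sum_range_reflect]
        refine Finset.sum_congr rfl fun j hj => ?_
        rw [Finset.mem_range] at hj
        congr 3
        omega
    _ = ∑ j ∈ Finset.range (card s + 1), ∑ k ∈ Finset.range (j + 1),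
          Polynomial.C (s.esymm (card s - j)) *
            ((j.stirlingSecond k : Polynomial R) * descPochhammer R k) := by
        simp only [Polynomial.X_pow_eq_sum_stirlingSecond_mul_descPochhammer, Finset.mul_sum]
    _ = ∑ k ∈ Finset.range (card s + 1), ∑ j ∈ Finset.Icc k (card s),
          Polynomial.C (s.esymm (card s - j)) *
            ((j.stirlingSecond k : Polynomial R) * descPochhammer R k) := by
        refine Finset.sum_comm' fun j k => ?_
        simp only [Finset.mem_range, Finset.mem_Icc]
        omega
    _ = _ := by
        simp only [map_sum, Finset.sum_mul, map_mul, map_natCast]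
        exact Finset.sum_congr rfl fun k _ => Finset.sum_congr rfl fun j _ => by ring

theorem Multiset.prod_X_add_C_eq_esymm_add_sum_stirlingSecond {R : Type*} [CommRing R]
    (s : Multiset R) :
    (s.map fun r => Polynomial.X + Polynomial.C r).prod =
      Polynomial.C (s.esymm (card s)) + ∑ k ∈ Finset.Icc 1 (card s),
        Polynomial.C (∑ j ∈ Finset.Icc k (card s),
          (j.stirlingSecond k : R) * s.esymm (card s - j)) * descPochhammer R k := by
  have hzero : ∑ j ∈ Finset.Icc 0 (card s), (j.stirlingSecond 0 : R) * s.esymm (card s - j) =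
      s.esymm (card s) := by
    rw [← Finset.insert_Icc_add_one_left_eq_Icc (Nat.zero_le _), Finset.sum_insert (by simp),
      Finset.sum_eq_zero fun j hj => ?_]
    · simp
    · rw [Nat.stirlingSecond_zero_right_of_ne_zero (by simp at hj; omega), Nat.cast_zero,
        zero_mul]
  rw [prod_X_add_C_eq_sum_stirlingSecond, Nat.range_succ_eq_Icc_zero,
    ← Finset.insert_Icc_add_one_left_eq_Icc (Nat.zero_le _), Finset.sum_insert (by simp), hzero,
    descPochhammer_zero, mul_one, zero_add]

theorem Multiset.prod_X_add_C_eq_sum_stirlingSecond_pred {R : Type*} [CommRing R]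
    (s : Multiset R) {N : ℕ} (hN : card s + 1 = N) :
    (s.map fun r => Polynomial.X + Polynomial.C r).prod =
      ∑ k ∈ Finset.Icc 1 N, Polynomial.C (∑ j ∈ Finset.Icc k N,
        ((j - 1).stirlingSecond (k - 1) : R) * s.esymm (N - j)) * descPochhammer R (k - 1) := by
  subst hN
  rw [prod_X_add_C_eq_sum_stirlingSecond, Nat.range_succ_eq_Icc_zero, Finset.sum_Icc_add_one]
  refine Finset.sum_congr rfl fun k _ => ?_
  rw [Finset.sum_Icc_add_one]
  simp

theorem PowerSeries.coeff_X_pow_mul_iterate_derivative {R : Type*} [CommSemiring R]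
    (f : R⟦X⟧) (k n : ℕ) :
    coeff n (X ^ k * (d⁄dX R)^[k] f) = n.descFactorial k * coeff n f := by
  rw [coeff_X_pow_mul']
  split_ifs with hk
  · rw [coeff_iterate_derivative, ← Nat.add_descFactorial_eq_ascFactorial, Nat.sub_add_cancel hk]
  · rw [Nat.descFactorial_of_lt (not_le.mp hk), Nat.cast_zero, zero_mul]

theorem PowerSeries.coeff_C_sub_C_mul_X_mul_X_pow_pred_mul_iterate_derivative {R : Type*}
    [CommRing R] (β α : R) (f : R⟦X⟧) {k : ℕ} (hk : k ≠ 0) (n : ℕ) :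
    coeff n ((C β - C α * X) * X ^ (k - 1) * (d⁄dX R)^[k] f) =
      β * n.descFactorial (k - 1) * coeff n (d⁄dX R f) - α * n.descFactorial k * coeff n f := by
  obtain ⟨k, rfl⟩ := Nat.exists_eq_succ_of_ne_zero hk
  have hsplit : (C β - C α * X) * X ^ k * (d⁄dX R)^[k + 1] f =
      C β * (X ^ k * (d⁄dX R)^[k] (d⁄dX R f)) -
        C α * (X ^ (k + 1) * (d⁄dX R)^[k + 1] f) := by
    rw [Function.iterate_succ_apply]
    ring
  rw [Nat.succ_sub_one, hsplit, map_sub, coeff_C_mul, coeff_C_mul,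
    coeff_X_pow_mul_iterate_derivative, coeff_X_pow_mul_iterate_derivative]
  ring

theorem coeff_thetaOp (c : ℂ) (f : ℂ⟦X⟧) (n : ℕ) :
    coeff n (thetaOp c f) = (n + c) * coeff n f := by
  cases n with
  | zero => simp [thetaOp]
  | succ n =>
    rw [thetaOp, map_add, coeff_succ_X_mul, coeff_derivative, coeff_C_mul]
    push_cast
    ring

theorem coeff_prodOp (cs : List ℂ) (f : ℂ⟦X⟧) (n : ℕ) :
    coeff n (prodOp cs f) =
      ((cs : Multiset ℂ).map fun c => Polynomial.X + Polynomial.C c).prod.eval (n : ℂ) *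
        coeff n f := by
  induction cs with
  | nil => simp [prodOp]
  | cons c cs ih =>
    simp only [prodOp, Function.comp_apply, coeff_thetaOp, ih, ← Multiset.cons_coe,
      Multiset.map_cons, Multiset.prod_cons, Polynomial.eval_mul, Polynomial.eval_add,
      Polynomial.eval_X, Polynomial.eval_C]
    ring

/-- Expansion of the generalized hypergeometric operator via Stirling numbers:
`(∏_{j=1}^{N-1}(ϑ+b_j))∂ − ∏_{i=1}^{N}(ϑ+a_i) =
  Σ_{k=1}^{N} (Σ_{j=k}^{N} (S(j−1,k−1)σ_{N−j}(b) − S(j,k)σ_{N−j}(a)·x)) x^{k−1}∂^k − σ_N(a)`. -/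
theorem hypergeomOp_stirling_expansion (N : ℕ) (hN : 2 ≤ N)
    (a : Fin N → ℂ) (b : Fin (N - 1) → ℂ) (w : ℂ⟦X⟧) :
    prodOp (List.ofFn b) (PowerSeries.derivative ℂ w) - prodOp (List.ofFn a) w =
      (∑ k ∈ Finset.Icc 1 N,
        (∑ j ∈ Finset.Icc k N,
          (PowerSeries.C (R := ℂ) ((stirling2 (j - 1) (k - 1) : ℂ) * esymmOf b (N - j)) -
            PowerSeries.C (R := ℂ) ((stirling2 j k : ℂ) * esymmOf a (N - j)) * X)) *
          X ^ (k - 1) * (fun g : ℂ⟦X⟧ => PowerSeries.derivative ℂ g)^[k] w) -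
      PowerSeries.C (R := ℂ) (esymmOf a N) * w := by
  simp only [esymmOf, stirling2_eq_stirlingSecond, Finset.sum_sub_distrib, ← Finset.sum_mul,
    ← map_sum]
  set A : Multiset ℂ := ↑(List.ofFn a)
  set B : Multiset ℂ := ↑(List.ofFn b)
  have hA : Multiset.card A = N := by simp [A]
  have hB : Multiset.card B + 1 = N := by simp [B]; omega
  ext n
  have pA := congrArg (Polynomial.eval (n : ℂ)) A.prod_X_add_C_eq_esymm_add_sum_stirlingSecond
  have pB := congrArg (Polynomial.eval (n : ℂ)) (B.prod_X_add_C_eq_sum_stirlingSecond_pred hB)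
  simp only [hA, Polynomial.eval_add, Polynomial.eval_C, Polynomial.eval_finsetSum,
    Polynomial.eval_mul, descPochhammer_eval_eq_descFactorial] at pA pB
  rw [map_sub, map_sub, coeff_prodOp, coeff_prodOp, pA, pB, map_sum, coeff_C_mul,
    Finset.sum_congr rfl fun k hk => coeff_C_sub_C_mul_X_mul_X_pow_pred_mul_iterate_derivative
      _ _ w (by simp at hk; omega) n,
    Finset.sum_sub_distrib, ← Finset.sum_mul, ← Finset.sum_mul]
  ring
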